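/- Let σ(x) = 1/(1+e^{−x}), and for s ≥ 1 define ψ^s : ℝ → ℝ by ψ^s(x) = σ(s(x + 3/2)) − σ(s(x − 3/2)); for N ∈ ℕ, d ∈ ℕ and m ∈ {0,…,N}^d define φ^s_m : ℝ^d → ℝ by φ^s_m(x) = ∏_{l=1}^d ψ^s(3N(x_l − m_l/N)). Then for every d ∈ ℕ and k ∈ ℕ₀ there exists a constant C = C(k, d) > 0 such that for all N ∈ ℕ, all s ≥ 1, every multi-index α with |α| ≤ k and every x ∈ (0,1)^d, |D^α(1 − ∑_{m∈{0,…,N}^d} φ^s_m)(x)| ≤ C·N^k·s^k·e^{−s}. (The bump functions form an approximate partition of unity, exponentially close to an exact one in s.) -/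

import Mathlib

/-- Iterated partial derivative `D^α` in the directions listed in `u` (a multi-index `α`
with `|α| = u.length`). -/
noncomputable def multiDeriv {d : ℕ} : List (Fin d) → ((Fin d → ℝ) → ℝ) → ((Fin d → ℝ) → ℝ)
  | [], f => f
  | i :: u, f => fun x => fderiv ℝ (multiDeriv u f) x (Pi.single i 1)

/-- The sigmoid (logistic) function. -/
noncomputable def sigmoid (x : ℝ) : ℝ := 1 / (1 + Real.exp (-x))

/-- The one-dimensional approximate bump `ψ^s(x) = σ(s(x+3/2)) - σ(s(x-3/2))`. -/
noncomputable def psiSig (s x : ℝ) : ℝ :=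
  sigmoid (s * (x + 3 / 2)) - sigmoid (s * (x - 3 / 2))

/-- The multi-dimensional bump `φ^s_m(x) = ∏_l ψ^s(3N(x_l - m_l/N))`. -/
noncomputable def bump (d N : ℕ) (s : ℝ) (m : Fin d → ℕ) (x : Fin d → ℝ) : ℝ :=
  ∏ l : Fin d, psiSig s (3 * (N : ℝ) * (x l - (m l : ℝ) / (N : ℝ)))

/-- The open unit cube `(0,1)^d`. -/
def unitCube (d : ℕ) : Set (Fin d → ℝ) := {x | ∀ i, x i ∈ Set.Ioo (0 : ℝ) 1}

/-!
Summing `ψ^s(3N(t - j/N))` over `j = 0, …, N` telescopes to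
`g(t) = σ(3Nst + 3s/2) - σ(3Nst - 3Ns - 3s/2)`, and the sum over the grid `{0, …, N}^d`
factorizes, so `∑_m φ^s_m(x) = ∏_l g(x_l)`. For `t ∈ (0, 1)` the first sigmoid argument is
`≥ s` and the second `≤ -s`, so `|1 - g(t)| ≤ 2e^{-s}`. Every derivative of `σ` is `σ (1 - σ)`
times a polynomial in `σ`, hence `O(e^{-|y|})`, and the chain rule gives
`|g^{(n)}(t)| = O((3Ns)^n e^{-s})` for `n ≥ 1`. A mixed partial derivative of `1 - ∏_l g(x_l)`
is either `1 - ∏_l g(x_l)` itself or minus a product of one-variable derivatives of `g` in which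
at least one factor is differentiated; both are `O((3Ns)^k e^{-s})`.
-/

open scoped ContDiff Polynomial

lemma sigmoid_eq_real_sigmoid : sigmoid = Real.sigmoid :=
  funext fun _ => one_div _

namespace Real

lemma sigmoid_le_exp (x : ℝ) : sigmoid x ≤ exp x := by
  have h : sigmoid x = sigmoid (-x) * exp x := by
    rw [← sigmoid_mul_rexp_neg, mul_assoc, ← exp_add, neg_add_cancel, exp_zero, mul_one]
  rw [h]
  exact mul_le_of_le_one_left (exp_pos x).le (sigmoid_le_one _)

lemma one_sub_sigmoid_le_exp (x : ℝ) : 1 - sigmoid x ≤ exp (-x) := by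
  rw [← sigmoid_neg]; exact sigmoid_le_exp _

lemma sigmoid_mul_one_sub_le (x : ℝ) : sigmoid x * (1 - sigmoid x) ≤ exp (-|x|) := by
  have h0 := sigmoid_pos x
  have h1 := sigmoid_lt_one x
  rcases abs_cases x with ⟨hx, -⟩ | ⟨hx, -⟩ <;> rw [hx]
  · nlinarith [one_sub_sigmoid_le_exp x]
  · rw [neg_neg]; nlinarith [sigmoid_le_exp x]

lemma exists_iteratedDeriv_succ_sigmoid_eq (n : ℕ) : ∃ Q : ℝ[X], ∀ y,
    iteratedDeriv (n + 1) sigmoid y = sigmoid y * (1 - sigmoid y) * Q.eval (sigmoid y) := by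
  induction n with
  | zero => exact ⟨1, fun y => by simp [deriv_sigmoid]⟩
  | succ n ih =>
    obtain ⟨Q, hQ⟩ := ih
    set P : ℝ[X] := .X * (1 - .X) * Q
    have hP : iteratedDeriv (n + 1) sigmoid = fun y => P.eval (sigmoid y) := by
      funext y; simp [P, hQ y]
    refine ⟨P.derivative, fun y => ?_⟩
    rw [iteratedDeriv_succ, hP]
    exact ((P.hasDerivAt _).comp y (hasDerivAt_sigmoid y)).deriv.trans (by ring)

lemma exists_abs_iteratedDeriv_sigmoid_le (k : ℕ) :
    ∃ C, ∀ n, 0 < n → n ≤ k → ∀ y, |iteratedDeriv n sigmoid y| ≤ C * exp (-|y|) := by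
  choose Q hQ using exists_iteratedDeriv_succ_sigmoid_eq
  obtain ⟨C, hC⟩ := (isCompact_Icc (a := (0 : ℝ)) (b := 1)).exists_bound_of_continuousOn
    (f := fun z => ∑ n ∈ Finset.range k, |(Q n).eval z|) (by fun_prop)
  refine ⟨C, fun n hn hnk y => ?_⟩
  obtain ⟨m, rfl⟩ := Nat.exists_eq_add_of_lt hn
  have hσ : sigmoid y ∈ Set.Icc (0 : ℝ) 1 := ⟨sigmoid_nonneg y, sigmoid_le_one y⟩
  have hQm : |(Q m).eval (sigmoid y)| ≤ C :=
    calc |(Q m).eval (sigmoid y)| ≤ ∑ n ∈ Finset.range k, |(Q n).eval (sigmoid y)| :=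
          Finset.single_le_sum (f := fun n => |(Q n).eval (sigmoid y)|)
            (fun n _ => abs_nonneg _) (Finset.mem_range.2 (by omega))
      _ ≤ C := (le_abs_self _).trans (hC _ hσ)
  rw [zero_add, hQ, abs_mul, abs_of_pos (mul_pos (sigmoid_pos y) (sub_pos.2 (sigmoid_lt_one y))),
    mul_comm C]
  exact mul_le_mul (sigmoid_mul_one_sub_le y) hQm (abs_nonneg _) (exp_pos _).le

end Real

section MultiDeriv

variable {d : ℕ}

lemma multiDeriv_const_sub (c : ℝ) (f : (Fin d → ℝ) → ℝ) (u : List (Fin d)) :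
    multiDeriv u (fun y => c - f y) = fun x => (if u = [] then c else 0) - multiDeriv u f x := by
  induction u with
  | nil => simp [multiDeriv]
  | cons i u ih =>
    funext x
    simp [multiDeriv, ih, fderiv_const_sub]

lemma fderiv_prod_apply_single (g : Fin d → ℝ → ℝ) (x : Fin d → ℝ)
    (hg : ∀ l, DifferentiableAt ℝ (g l) (x l)) (i : Fin d) :
    fderiv ℝ (fun y => ∏ l, g l (y l)) x (Pi.single i 1) =
      deriv (g i) (x i) * ∏ l ∈ Finset.univ.erase i, g l (x l) := by
  have hprod : HasFDerivAt (fun y : Fin d → ℝ => ∏ l, g l (y l)) _ x :=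
    HasFDerivAt.finsetProd (u := Finset.univ) fun l _ => (hg l).hasDerivAt.comp_hasFDerivAt x
      (ContinuousLinearMap.proj l : (Fin d → ℝ) →L[ℝ] ℝ).hasFDerivAt
  rw [hprod.fderiv, sum_apply, Finset.sum_eq_single i]
  · simp [mul_comm]
  · intro l _ hl
    simp [hl.symm]
  · simp

lemma multiDeriv_prod (f : Fin d → ℝ → ℝ) (hf : ∀ l, ContDiff ℝ ∞ (f l)) (u : List (Fin d)) :
    multiDeriv u (fun y => ∏ l, f l (y l)) =
      fun x => ∏ l, iteratedDeriv (u.count l) (f l) (x l) := by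
  induction u with
  | nil => simp [multiDeriv]
  | cons i u ih =>
    funext x
    simp only [multiDeriv, ih]
    rw [fderiv_prod_apply_single _ _ fun l =>
      ((hf l).differentiable_iteratedDeriv _
        (WithTop.coe_lt_coe.2 (ENat.natCast_lt_top _))).differentiableAt,
      ← iteratedDeriv_succ, ← List.count_cons_self, ← Finset.mul_prod_erase _ _ (Finset.mem_univ i)]
    congr 1
    refine Finset.prod_congr rfl fun l hl => ?_
    rw [List.count_cons_of_ne (Finset.ne_of_mem_erase hl).symm]

end MultiDeriv

lemma sum_count_eq_length {α : Type*} [Fintype α] [DecidableEq α] (u : List α) :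
    ∑ a, u.count a = u.length := by
  simpa using Multiset.sum_count_eq_card (s := Finset.univ) (m := (u : Multiset α)) (by simp)

lemma abs_one_sub_prod_le {ι : Type*} [DecidableEq ι] (s : Finset ι) (a : ι → ℝ) {ε : ℝ}
    (h_one : ∀ i ∈ s, |1 - a i| ≤ ε) (h_le : ∀ i ∈ s, |a i| ≤ 1) :
    |1 - ∏ i ∈ s, a i| ≤ s.card * ε := by
  induction s using Finset.induction_on with
  | empty => simp
  | insert i s hi ih =>
    simp only [Finset.mem_insert, forall_eq_or_imp] at h_one h_le
    have hrest := ih h_one.2 h_le.2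
    rw [Finset.prod_insert hi, Finset.card_insert_of_notMem hi, Nat.cast_succ]
    calc |1 - a i * ∏ j ∈ s, a j| = |(1 - a i) + a i * (1 - ∏ j ∈ s, a j)| := by ring_nf
      _ ≤ |1 - a i| + |a i| * |1 - ∏ j ∈ s, a j| := by
          rw [← abs_mul]; exact abs_add_le _ _
      _ ≤ ε + 1 * (s.card * ε) := by
          gcongr
          · exact h_one.1
          · exact h_le.1
      _ = (s.card + 1) * ε := by ring

lemma abs_multiDeriv_one_sub_prod_le {d : ℕ} (f : ℝ → ℝ) (hf : ContDiff ℝ ∞ f)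
    (u : List (Fin d)) (x : Fin d → ℝ) {M c ε : ℝ} (hM : 1 ≤ M) (hc : 0 ≤ c) (hε₀ : 0 ≤ ε)
    (hε₁ : ε ≤ 1) (hf_le : ∀ l, |f (x l)| ≤ 1) (hf_one : ∀ l, |1 - f (x l)| ≤ ε)
    (hf_deriv : ∀ l n, 0 < n → n ≤ u.length → |iteratedDeriv n f (x l)| ≤ M * c ^ n * ε) :
    |multiDeriv u (fun y => 1 - ∏ l, f (y l)) x| ≤ (d + M ^ d * c ^ u.length) * ε := by
  rw [multiDeriv_const_sub, multiDeriv_prod (fun _ => f) fun _ => hf]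
  rcases u with _ | ⟨i, u⟩
  · have h := abs_one_sub_prod_le Finset.univ (fun l => f (x l)) (fun l _ => hf_one l)
      fun l _ => hf_le l
    simp only [Finset.card_univ, Fintype.card_fin] at h
    simpa using h.trans (by nlinarith [pow_pos (zero_lt_one.trans_le hM) d])
  set n := fun l => (i :: u).count l
  have hn_le : ∀ l, n l ≤ (i :: u).length := fun l => List.count_le_length
  have hfactor : ∀ l, |iteratedDeriv (n l) f (x l)| ≤ M * c ^ n l := by
    intro l
    rcases (n l).eq_zero_or_pos with h | h
    · simpa [h] using (hf_le l).trans hM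
    · exact (hf_deriv l _ h (hn_le l)).trans (mul_le_of_le_one_right (by positivity) hε₁)
  have hfactor_i : |iteratedDeriv (n i) f (x i)| ≤ M * c ^ n i * ε :=
    hf_deriv i _ (List.count_pos_iff.2 List.mem_cons_self) (hn_le i)
  simp only [reduceCtorEq, if_false, zero_sub, abs_neg, Finset.abs_prod]
  calc ∏ l, |iteratedDeriv (n l) f (x l)|
      = |iteratedDeriv (n i) f (x i)| * ∏ l ∈ Finset.univ.erase i, |iteratedDeriv (n l) f (x l)| :=
        (Finset.mul_prod_erase _ _ (Finset.mem_univ i)).symm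
    _ ≤ M * c ^ n i * ε * ∏ l ∈ Finset.univ.erase i, M * c ^ n l := by
        gcongr with l
        exact hfactor l
    _ = ε * ∏ l, M * c ^ n l := by
        rw [← Finset.mul_prod_erase _ _ (Finset.mem_univ i)]; ring
    _ = ε * (M ^ d * c ^ (i :: u).length) := by
        rw [Finset.prod_mul_distrib, Finset.prod_pow_eq_pow_sum, sum_count_eq_length]
        simp
    _ ≤ (d + M ^ d * c ^ (i :: u).length) * ε := by nlinarith [d.cast_nonneg (α := ℝ)]

lemma iteratedDeriv_comp_mul_add (f : ℝ → ℝ) (n : ℕ) (c a t : ℝ) :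
    iteratedDeriv n (fun t => f (c * t + a)) t = c ^ n * iteratedDeriv n f (c * t + a) := by
  induction n generalizing t with
  | zero => simp
  | succ n ih =>
    have h := deriv_comp_mul_left c (fun y => iteratedDeriv n f (y + a)) t
    simp only [deriv_comp_add_const, smul_eq_mul] at h
    rw [iteratedDeriv_succ, funext ih, deriv_const_mul_field']
    beta_reduce
    rw [h, iteratedDeriv_succ, pow_succ, mul_assoc]

namespace Real

lemma two_mul_exp_neg_le_one {s : ℝ} (hs : 1 ≤ s) : 2 * exp (-s) ≤ 1 := by
  rw [exp_neg, ← div_eq_mul_inv, div_le_one (exp_pos s)]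
  linarith [add_one_le_exp s]

lemma abs_sigmoid_sub_sigmoid_le_one (a b : ℝ) : |sigmoid a - sigmoid b| ≤ 1 := by
  rw [abs_le]
  constructor <;> linarith [sigmoid_pos a, sigmoid_lt_one a, sigmoid_pos b, sigmoid_lt_one b]

lemma abs_one_sub_sigmoid_sub_sigmoid_le {a b s : ℝ} (ha : s ≤ a) (hb : b ≤ -s) :
    |1 - (sigmoid a - sigmoid b)| ≤ 2 * exp (-s) := by
  have h₁ := (one_sub_sigmoid_le_exp a).trans (exp_le_exp.2 (neg_le_neg ha))
  have h₂ := (sigmoid_le_exp b).trans (exp_le_exp.2 hb)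
  rw [abs_of_nonneg (by linarith [sigmoid_lt_one a, sigmoid_pos b])]
  linarith

lemma contDiff_sigmoid_mul_add (c a : ℝ) : ContDiff ℝ ∞ fun t => sigmoid (c * t + a) :=
  (contDiff_sigmoid.comp (contDiff_const.mul contDiff_id |>.add contDiff_const)).of_le le_top

lemma abs_iteratedDeriv_sigmoid_sub_sigmoid_le {n : ℕ} {C c a b s t : ℝ}
    (hC : ∀ y, |iteratedDeriv n sigmoid y| ≤ C * exp (-|y|)) (hc : 0 ≤ c)
    (ha : s ≤ c * t + a) (hb : c * t + b ≤ -s) :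
    |iteratedDeriv n (fun t => sigmoid (c * t + a) - sigmoid (c * t + b)) t| ≤
      C * c ^ n * (2 * exp (-s)) := by
  have hsmooth (p : ℝ) : ContDiffAt ℝ n (fun t => sigmoid (c * t + p)) t :=
    (contDiff_sigmoid_mul_add c p).contDiffAt.of_le (WithTop.coe_le_coe.2 le_top)
  have hC₀ : 0 ≤ C := nonneg_of_mul_nonneg_left ((abs_nonneg _).trans (hC 0)) (exp_pos _)
  have hexp {y : ℝ} (hy : s ≤ |y|) : C * exp (-|y|) ≤ C * exp (-s) := by gcongr
  rw [iteratedDeriv_fun_sub (hsmooth a) (hsmooth b), iteratedDeriv_comp_mul_add,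
    iteratedDeriv_comp_mul_add, ← mul_sub, abs_mul, abs_of_nonneg (pow_nonneg hc n)]
  calc c ^ n * |iteratedDeriv n sigmoid (c * t + a) - iteratedDeriv n sigmoid (c * t + b)|
      ≤ c ^ n * (C * exp (-s) + C * exp (-s)) := by
        gcongr
        refine (abs_sub _ _).trans (add_le_add ?_ ?_)
        · exact (hC _).trans (hexp (ha.trans (le_abs_self _)))
        · exact (hC _).trans (hexp ((le_neg.1 hb).trans (neg_le_abs _)))
    _ = C * c ^ n * (2 * exp (-s)) := by ring

end Real

lemma sum_psiSig_eq {N : ℕ} (hN : N ≠ 0) (s t : ℝ) :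
    ∑ j : Fin (N + 1), psiSig s (3 * (N : ℝ) * (t - ((j : ℕ) : ℝ) / (N : ℝ))) =
      Real.sigmoid (3 * N * s * t + 3 * s / 2) -
        Real.sigmoid (3 * N * s * t + (-(3 * N * s) - 3 * s / 2)) := by
  have hN' : (N : ℝ) ≠ 0 := Nat.cast_ne_zero.2 hN
  set h : ℕ → ℝ := fun j => Real.sigmoid (3 * N * s * t - 3 * s * j + 3 * s / 2)
  have hterm (j : ℕ) : psiSig s (3 * (N : ℝ) * (t - (j : ℝ) / N)) = h j - h (j + 1) := by
    simp only [psiSig, sigmoid_eq_real_sigmoid, h]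
    congr 2 <;> field_simp
    push_cast; ring
  rw [Fin.sum_univ_eq_sum_range (fun j : ℕ => psiSig s (3 * (N : ℝ) * (t - (j : ℝ) / N))),
    Finset.sum_congr rfl fun j _ => hterm j, Finset.sum_range_sub']
  simp only [h]
  congr 2
  · ring
  · push_cast; ring

lemma one_sub_sum_bump_eq {d N : ℕ} (hN : N ≠ 0) (s : ℝ) :
    (fun y => 1 - ∑ m : Fin d → Fin (N + 1), bump d N s (fun l => (m l : ℕ)) y) =
      fun y => 1 - ∏ l, (Real.sigmoid (3 * N * s * y l + 3 * s / 2) -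
        Real.sigmoid (3 * N * s * y l + (-(3 * N * s) - 3 * s / 2))) := by
  funext y
  simp only [bump]
  rw [← Fintype.prod_sum fun l (j : Fin (N + 1)) => psiSig s (3 * (N : ℝ) * (y l - (j : ℕ) / N))]
  simp only [sum_psiSig_eq hN]

theorem bump_partition_of_unity_general (d : ℕ) (k : ℕ) :
    ∃ C : ℝ, 0 < C ∧
      ∀ N : ℕ, 1 ≤ N → ∀ s : ℝ, 1 ≤ s →
        ∀ u : List (Fin d), u.length ≤ k → ∀ x ∈ unitCube d,
          |multiDeriv u
              (fun y => 1 - ∑ m : Fin d → Fin (N + 1),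
                bump d N s (fun l => (m l : ℕ)) y) x| ≤
            C * (N : ℝ) ^ k * s ^ k * Real.exp (-s) := by
  obtain ⟨B, hB⟩ := Real.exists_abs_iteratedDeriv_sigmoid_le k
  set M := max B 1
  refine ⟨2 * (d + M ^ d * 3 ^ k), by positivity, fun N hN s hs u hu x hx => ?_⟩
  have hNs : 1 ≤ (N : ℝ) * s := one_le_mul_of_one_le_of_one_le (Nat.one_le_cast.2 hN) hs
  rw [one_sub_sum_bump_eq (by omega)]
  set c : ℝ := 3 * N * s
  have hc : 1 ≤ c := by simp only [c]; nlinarith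
  have ha (l : Fin d) : s ≤ c * x l + 3 * s / 2 := by nlinarith [(hx l).1]
  have hb (l : Fin d) : c * x l + (-c - 3 * s / 2) ≤ -s := by nlinarith [(hx l).2]
  have key := abs_multiDeriv_one_sub_prod_le (M := M) (c := c) _
    ((Real.contDiff_sigmoid_mul_add _ _).sub (Real.contDiff_sigmoid_mul_add _ _)) u x
    (le_max_right B 1) (by positivity) (by positivity) (Real.two_mul_exp_neg_le_one hs)
    (fun l => Real.abs_sigmoid_sub_sigmoid_le_one _ _)
    (fun l => Real.abs_one_sub_sigmoid_sub_sigmoid_le (ha l) (hb l))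
    fun l n hn hnu => (Real.abs_iteratedDeriv_sigmoid_sub_sigmoid_le (hB n hn (hnu.trans hu))
      (by positivity) (ha l) (hb l)).trans (by gcongr; exact le_max_left B 1)
  calc _ ≤ (d + M ^ d * c ^ u.length) * (2 * Real.exp (-s)) := key
    _ ≤ (d * ((N : ℝ) * s) ^ k + M ^ d * (3 ^ k * ((N : ℝ) * s) ^ k)) * (2 * Real.exp (-s)) := by
        gcongr
        · exact le_mul_of_one_le_right d.cast_nonneg (one_le_pow₀ hNs)
        · calc c ^ u.length ≤ c ^ k := pow_le_pow_right₀ hc hu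
            _ = 3 ^ k * ((N : ℝ) * s) ^ k := by rw [← mul_pow, ← mul_assoc]
    _ = _ := by ring

/-- The sigmoid bump functions form an approximate partition of unity,
exponentially close (in `s`) to an exact one: for every `d` and `k` there is
`C = C(k,d) > 0` such that for all `N ≥ 1`, `s ≥ 1`, every multi-index `α` with `|α| ≤ k`
and every `x ∈ (0,1)^d`, `|D^α (1 - ∑_{m ∈ {0,…,N}^d} φ^s_m)(x)| ≤ C N^k s^k e^{-s}`. -/
theorem bump_partition_of_unity (d : ℕ) (hd : 0 < d) (k : ℕ) :
    ∃ C : ℝ, 0 < C ∧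
      ∀ N : ℕ, 1 ≤ N → ∀ s : ℝ, 1 ≤ s →
        ∀ u : List (Fin d), u.length ≤ k → ∀ x ∈ unitCube d,
          |multiDeriv u
              (fun y => 1 - ∑ m : Fin d → Fin (N + 1),
                bump d N s (fun l => (m l : ℕ)) y) x| ≤
            C * (N : ℝ) ^ k * s ^ k * Real.exp (-s) :=
  bump_partition_of_unity_general d k
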